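/- Let l be a node maximizing r 0, so that r 0 l = r₁(V). If node i is connected to l within h hops in the degree-1 geometric graph G₁, i.e., there is a walk in G₁ from i to l of length at most h, then r h i = r₁(V). -/

import Mathlib

open Metric

/-- The geometric graph of radius `r` on points `V`. -/
def geomGraph (n : ℕ) (V : Fin n → EuclideanSpace ℝ (Fin 2)) (r : ℝ) :
    SimpleGraph (Fin n) where
  Adj i j := i ≠ j ∧ dist (V i) (V j) ≤ r
  symm := ⟨fun i j ⟨h1, h2⟩ => ⟨h1.symm, by rwa [dist_comm]⟩⟩
  loopless := ⟨fun i ⟨h, _⟩ => h rfl⟩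

/-- The degree-1 radius `r₁(V) = max_i min_{j ≠ i} ‖V i − V j‖`. -/
noncomputable def degOneRadius (n : ℕ) (V : Fin n → EuclideanSpace ℝ (Fin 2)) : ℝ :=
  ⨆ i : Fin n, ⨅ j : {j : Fin n // j ≠ i}, dist (V i) (V j.1)

/-- The iterative range algorithm: `r 0 i = min_{j ≠ i} d i j`, and
`r (k+1) i = max_{j ∈ S k i} r k j` where `S k i = {j : d j i ≤ r k j}`. -/
noncomputable def rIter (n : ℕ) (V : Fin n → EuclideanSpace ℝ (Fin 2)) :
    ℕ → Fin n → ℝ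
  | 0 => fun i => ⨅ j : {j : Fin n // j ≠ i}, dist (V i) (V j.1)
  | k + 1 => fun i =>
      ⨆ j : {j : Fin n // dist (V j) (V i) ≤ rIter n V k j}, rIter n V k j.1

lemma ne_subtype_nonempty (n : ℕ) (hn : 2 ≤ n) (i : Fin n) :
    Nonempty {j : Fin n // j ≠ i} := by
  obtain ⟨j, hj⟩ := Fintype.exists_ne_of_one_lt_card (by simp; omega) i
  exact ⟨⟨j, hj⟩⟩

lemma rIter_zero_nonneg (n : ℕ) (hn : 2 ≤ n) (V : Fin n → EuclideanSpace ℝ (Fin 2))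
    (i : Fin n) : 0 ≤ rIter n V 0 i := by
  have := ne_subtype_nonempty n hn i
  simp only [rIter]
  exact le_ciInf fun j => dist_nonneg

lemma rIter_nonneg (n : ℕ) (hn : 2 ≤ n) (V : Fin n → EuclideanSpace ℝ (Fin 2)) :
    ∀ k i, 0 ≤ rIter n V k i := by
  intro k
  induction k with
  | zero => exact rIter_zero_nonneg n hn V
  | succ k ih =>
    intro i
    have hmem : dist (V i) (V i) ≤ rIter n V k i := by simpa [dist_self] using ih i
    calc (0 : ℝ) ≤ rIter n V k i := ih i
      _ ≤ _ := by
        simp only [rIter]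
        exact le_ciSup (f := fun j : {j : Fin n // dist (V j) (V i) ≤ rIter n V k j} => rIter n V k j.1) (Finite.bddAbove_range _) ⟨i, hmem⟩

lemma rIter_step_ge (n : ℕ) (V : Fin n → EuclideanSpace ℝ (Fin 2)) (k : ℕ) (i j : Fin n)
    (hj : dist (V j) (V i) ≤ rIter n V k j) :
    rIter n V k j ≤ rIter n V (k + 1) i := by
  simp only [rIter]
  exact le_ciSup (f := fun j : {j : Fin n // dist (V j) (V i) ≤ rIter n V k j} => rIter n V k j.1) (Finite.bddAbove_range _) ⟨j, hj⟩

lemma rIter_le_R (n : ℕ) (hn : 2 ≤ n) (V : Fin n → EuclideanSpace ℝ (Fin 2)) :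
    ∀ k i, rIter n V k i ≤ degOneRadius n V := by
  intro k
  induction k with
  | zero =>
    intro i
    exact le_ciSup (Finite.bddAbove_range _) i
  | succ k ih =>
    intro i
    have hne : Nonempty {j : Fin n // dist (V j) (V i) ≤ rIter n V k j} :=
      ⟨⟨i, by simpa [dist_self] using rIter_nonneg n hn V k i⟩⟩
    simp only [rIter]
    exact ciSup_le fun j => ih j.1

theorem rIter_eq_degOneRadius_of_walk (n : ℕ) (hn : 2 ≤ n)
    (V : Fin n → EuclideanSpace ℝ (Fin 2)) (l : Fin n)
    (hmax : ∀ j, rIter n V 0 j ≤ rIter n V 0 l)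
    (hl : rIter n V 0 l = degOneRadius n V)
    (i : Fin n) (h : ℕ)
    (hwalk : ∃ w : (geomGraph n V (degOneRadius n V)).Walk i l, w.length ≤ h) :
    rIter n V h i = degOneRadius n V := by
  induction h generalizing i with
  | zero =>
    obtain ⟨w, hw⟩ := hwalk
    have : i = l := w.eq_of_length_eq_zero (Nat.le_zero.mp hw)
    subst this
    exact hl
  | succ h ih =>
    obtain ⟨w, hw⟩ := hwalk
    refine le_antisymm (rIter_le_R n hn V _ i) ?_
    cases w with
    | nil =>
      have hi : rIter n V h l = degOneRadius n V := ih l ⟨SimpleGraph.Walk.nil, by simp⟩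
      calc degOneRadius n V = rIter n V h l := hi.symm
        _ ≤ rIter n V (h + 1) l :=
          rIter_step_ge n V h l l (by simpa [dist_self] using rIter_nonneg n hn V h l)
    | cons hadj w' =>
      rename_i j
      have hj : rIter n V h j = degOneRadius n V :=
        ih j ⟨w', by simpa using Nat.succ_le_succ_iff.mp hw⟩
      have hd : dist (V j) (V i) ≤ rIter n V h j := by
        rw [hj, dist_comm]; exact (show i ≠ j ∧ dist (V i) (V j) ≤ degOneRadius n V from hadj).2
      calc degOneRadius n V = rIter n V h j := hj.symm
        _ ≤ rIter n V (h + 1) i := rIter_step_ge n V h i j hd
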